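/- If a ground term t over {d, e, +, ·} is a normal form of the rewrite system R (rules: x+e→x, e+x→x, (x+y)+z→x+(y+z), (x+y)·z→y·(x·z), (d·x)·y→x·(y+x), e·x→x, d·e→e), then every subterm of t of the form u·v has u = d. In particular every application-term in normal form equals d·u for some normal form u ≠ e. -/

import Mathlib

/-- Ground terms over constants d, e with binary operations + (add) and · (app). -/
inductive Tm : Type
  | d : Tm
  | e : Tm
  | add : Tm → Tm → Tm
  | app : Tm → Tm → Tm
  deriving DecidableEq

open Tm

/-- Root rewrite steps: instances of the oriented rules. -/
inductive Root : Tm → Tm → Prop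
  | addE (x) : Root (add x e) x
  | eAdd (x) : Root (add e x) x
  | assoc (x y z) : Root (add (add x y) z) (add x (add y z))
  | appAdd (x y z) : Root (app (add x y) z) (app y (app x z))
  | appD (x y) : Root (app (app d x) y) (app x (add y x))
  | appE (x) : Root (app e x) x
  | dE : Root (app d e) e

/-- One rewrite step: a root step applied at some subterm position. -/
inductive Step : Tm → Tm → Prop
  | root {t u} : Root t u → Step t u
  | addL {t t' u} : Step t t' → Step (add t u) (add t' u)
  | addR {t u u'} : Step u u' → Step (add t u) (add t u')
  | appL {t t' u} : Step t t' → Step (app t u) (app t' u)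
  | appR {t u u'} : Step u u' → Step (app t u) (app t u')

/-- Zero or more rewrite steps. -/
def Steps : Tm → Tm → Prop := Relation.ReflTransGen Step

/-- A normal form is a term to which no rule applies. -/
def NormalForm (t : Tm) : Prop := ∀ u, ¬ Step t u

/-- Provable equality in the equational theory (reflexive symmetric transitive
congruence closure of the rule instances). -/
def TermEq : Tm → Tm → Prop := Relation.EqvGen Step

/-- The (reflexive) subterm relation. -/
inductive Subterm : Tm → Tm → Prop
  | refl (t) : Subterm t t
  | addL {s t u} : Subterm s t → Subterm s (add t u)
  | addR {s t u} : Subterm s u → Subterm s (add t u)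
  | appL {s t u} : Subterm s t → Subterm s (app t u)
  | appR {s t u} : Subterm s u → Subterm s (app t u)

namespace NormalForm

variable {s t u v : Tm}

lemma add_left (h : NormalForm (add t u)) : NormalForm t :=
  fun _ hw => h _ (.addL hw)

lemma add_right (h : NormalForm (add t u)) : NormalForm u :=
  fun _ hw => h _ (.addR hw)

lemma app_left (h : NormalForm (app t u)) : NormalForm t :=
  fun _ hw => h _ (.appL hw)

lemma app_right (h : NormalForm (app t u)) : NormalForm u :=
  fun _ hw => h _ (.appR hw)

lemma of_subterm (hst : Subterm s t) : NormalForm t → NormalForm s := by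
  induction hst with
  | refl => exact id
  | addL _ ih => exact fun h => ih h.add_left
  | addR _ ih => exact fun h => ih h.add_right
  | appL _ ih => exact fun h => ih h.app_left
  | appR _ ih => exact fun h => ih h.app_right

theorem app_head_eq_d : ∀ {u v : Tm}, NormalForm (app u v) → u = d
  | d, _, _ => rfl
  | e, v, h => (h _ (.root (.appE v))).elim
  | add x y, v, h => (h _ (.root (.appAdd x y v))).elim
  | app x y, v, h => by
    obtain rfl := app_head_eq_d h.app_left
    exact (h _ (.root (.appD y v))).elim

lemma app_d_arg_ne_e (h : NormalForm (app d v)) : v ≠ e := by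
  rintro rfl
  exact h _ (.root .dE)

end NormalForm

theorem nf_app_head_is_d :
    ∀ t : Tm, NormalForm t →
      (∀ u v : Tm, Subterm (app u v) t → u = d) ∧
      (∀ u v : Tm, t = app u v → u = d ∧ NormalForm v ∧ v ≠ e) := by
  intro t ht
  refine ⟨fun u v hsub => (ht.of_subterm hsub).app_head_eq_d, ?_⟩
  rintro u v rfl
  obtain rfl := ht.app_head_eq_d
  exact ⟨rfl, ht.app_right, ht.app_d_arg_ne_e⟩
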